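/- Suppose u_h, v_h, q_h ∈ V_h^k satisfy, for every cell I_j and every polynomial test function φ of degree at most k on I_j, the two auxiliary equations of the conservative Scheme C1 with central fluxes: (v_h, φ)_{I_j} − ⟨{q_h}, φ⟩_{I_j} + (q_h, φ′)_{I_j} = ⟨{u_h}, φ⟩_{I_j} − (u_h, φ′)_{I_j} and (q_h, φ)_{I_j} = ⟨{v_h}, φ⟩_{I_j} − (v_h, φ′)_{I_j}, with periodic trace identification. Then the energy identity ∫_a^b v_h² dx + ∫_a^b q_h² dx + ∫_a^b q_h u_h dx = 0 holds. -/

import Mathlib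

/-!
Testing the second equation with `v` and the third with `q` and with `u`, then summing over
the cells, expresses the three integrals through the central-flux form `Lc`:
`∫ v² = Lc(q, v) + Lc(u, v)`, `∫ q² = Lc(v, q)` and `∫ q u = Lc(v, u)`. Central fluxes make
`Lc` skew-symmetric: on each cell integration by parts leaves only interface values, and after
periodic summation these cancel against the flux terms by the product rule for jumps
`[ω φ] = {ω} [φ] + {φ} [ω]`.
-/

open Polynomial Set

noncomputable section

namespace FW

variable {N : ℕ}

/-- Minus trace `ω⁻` at interface `j+1/2` (right end of cell `j`). -/
def trM (x : Fin (N + 1) → ℝ) (ω : Fin N → Polynomial ℝ) (j : Fin N) : ℝ :=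
  (ω j).eval (x j.succ)

/-- Plus trace `ω⁺` at interface `j+1/2` (left end of the next cell, cyclically). -/
def trP [NeZero N] (x : Fin (N + 1) → ℝ) (ω : Fin N → Polynomial ℝ) (j : Fin N) : ℝ :=
  (ω (j + 1)).eval (x (j + 1).castSucc)

/-- Average trace `{ω}`. -/
def trA [NeZero N] (x : Fin (N + 1) → ℝ) (ω : Fin N → Polynomial ℝ) (j : Fin N) : ℝ :=
  (trP x ω j + trM x ω j) / 2

/-- Jump `[ω]`. -/
def jmp [NeZero N] (x : Fin (N + 1) → ℝ) (ω : Fin N → Polynomial ℝ) (j : Fin N) : ℝ :=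
  trP x ω j - trM x ω j

/-- Cell L² pairing `(u, φ)_{I_j}` of a piecewise polynomial with a test polynomial. -/
def ipj (x : Fin (N + 1) → ℝ) (u : Fin N → Polynomial ℝ) (j : Fin N) (φ : Polynomial ℝ) : ℝ :=
  ∫ t in (x j.castSucc)..(x j.succ), (u j).eval t * φ.eval t

/-- Cell pairing `(f∘u, φ)_{I_j}`. -/
def ipfj (x : Fin (N + 1) → ℝ) (f : ℝ → ℝ) (u : Fin N → Polynomial ℝ) (j : Fin N)
    (φ : Polynomial ℝ) : ℝ :=
  ∫ t in (x j.castSucc)..(x j.succ), f ((u j).eval t) * φ.eval t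

/-- Boundary pairing `⟨g, φ⟩_{I_j}` for interface values `g`. -/
def bdj [NeZero N] (x : Fin (N + 1) → ℝ) (g : Fin N → ℝ) (j : Fin N) (φ : Polynomial ℝ) : ℝ :=
  g j * φ.eval (x j.succ) - g (j - 1) * φ.eval (x j.castSucc)

/-- Membership in the space `V_h^k` of piecewise polynomials of degree at most `k`. -/
def memV (k : ℕ) (ω : Fin N → Polynomial ℝ) : Prop :=
  ∀ j, (ω j).degree ≤ (k : WithBot ℕ)

/-- `L⁻(ω, φ)`. -/
def Lm [NeZero N] (x : Fin (N + 1) → ℝ) (ω φ : Fin N → Polynomial ℝ) : ℝ :=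
  ∑ j, (-(ipj x ω j (derivative (φ j))) + bdj x (trM x ω) j (φ j))

/-- `L⁺(ω, φ)`. -/
def Lp [NeZero N] (x : Fin (N + 1) → ℝ) (ω φ : Fin N → Polynomial ℝ) : ℝ :=
  ∑ j, (-(ipj x ω j (derivative (φ j))) + bdj x (trP x ω) j (φ j))

/-- `L^c(ω, φ)`. -/
def Lc [NeZero N] (x : Fin (N + 1) → ℝ) (ω φ : Fin N → Polynomial ℝ) : ℝ :=
  ∑ j, (-(ipj x ω j (derivative (φ j))) + bdj x (trA x ω) j (φ j))

/-- Godunov numerical flux. -/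
def godunov (f : ℝ → ℝ) (c d : ℝ) : ℝ :=
  if c < d then sInf (f '' Set.Icc c d) else sSup (f '' Set.Icc d c)

/-- Conservative numerical flux for `f(u) = u^p/p`, `F(u) = u^(p+1)/(p(p+1))`. -/
def consFlux (p : ℕ) (c d : ℝ) : ℝ :=
  if c = d then c ^ p / (p : ℝ)
  else (d ^ (p + 1) / ((p : ℝ) * ((p : ℝ) + 1)) - c ^ (p + 1) / ((p : ℝ) * ((p : ℝ) + 1))) / (d - c)

/-- Dissipative (Godunov-flux) nonlinear form `N^d`. -/
def Nd [NeZero N] (x : Fin (N + 1) → ℝ) (f : ℝ → ℝ) (ω φ : Fin N → Polynomial ℝ) : ℝ :=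
  ∑ j, (-(ipfj x f ω j (derivative (φ j)))
    + bdj x (fun i => godunov f (trM x ω i) (trP x ω i)) j (φ j))

/-- Conservative-flux nonlinear form `N^c`. -/
def Nc [NeZero N] (x : Fin (N + 1) → ℝ) (p : ℕ) (ω φ : Fin N → Polynomial ℝ) : ℝ :=
  ∑ j, (-(ipfj x (fun w => w ^ p / (p : ℝ)) ω j (derivative (φ j)))
    + bdj x (fun i => consFlux p (trM x ω i) (trP x ω i)) j (φ j))

end FW

namespace FW

variable {N : ℕ} (x : Fin (N + 1) → ℝ)

theorem ipj_derivative_add_ipj_derivative (ω φ : Fin N → ℝ[X]) (j : Fin N) :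
    ipj x ω j (derivative (φ j)) + ipj x φ j (derivative (ω j))
      = (ω j * φ j).eval (x j.succ) - (ω j * φ j).eval (x j.castSucc) := by
  rw [ipj, ipj, ← intervalIntegral.integral_add
    (f := fun t => (ω j).eval t * (derivative (φ j)).eval t)
    (g := fun t => (φ j).eval t * (derivative (ω j)).eval t)
    (((ω j).continuous.mul (derivative (φ j)).continuous).intervalIntegrable _ _)
    (((φ j).continuous.mul (derivative (ω j)).continuous).intervalIntegrable _ _)]
  simp only [eval_mul]
  rw [← intervalIntegral.integral_deriv_mul_eq_sub (fun t _ => (ω j).hasDerivAt t)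
    (fun t _ => (φ j).hasDerivAt t) ((derivative (ω j)).continuous.intervalIntegrable _ _)
    ((derivative (φ j)).continuous.intervalIntegrable _ _)]
  exact intervalIntegral.integral_congr fun t _ => by ring

variable [NeZero N]

theorem trP_sub_one (ω : Fin N → ℝ[X]) (j : Fin N) :
    trP x ω (j - 1) = (ω j).eval (x j.castSucc) := by
  rw [trP, sub_add_cancel]

theorem sum_bdj (g : Fin N → ℝ) (φ : Fin N → ℝ[X]) :
    ∑ j, bdj x g j (φ j) = -∑ j, g j * jmp x φ j := by
  -- reindexing by `j ↦ j - 1` in `Fin N` wraps around: this is the periodic identification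
  have shift : ∑ j, g (j - 1) * (φ j).eval (x j.castSucc) = ∑ j, g j * trP x φ j := by
    simp_rw [← trP_sub_one]
    exact Equiv.sum_comp (Equiv.subRight 1) fun j => g j * trP x φ j
  simp only [bdj, jmp, Finset.sum_sub_distrib, shift, mul_sub, neg_sub]
  rfl

theorem sum_eval_succ_sub_eval_castSucc (ω : Fin N → ℝ[X]) :
    ∑ j, ((ω j).eval (x j.succ) - (ω j).eval (x j.castSucc)) = -∑ j, jmp x ω j := by
  simpa [bdj] using sum_bdj x 1 ω

theorem jmp_mul (ω φ : Fin N → ℝ[X]) (j : Fin N) :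
    jmp x (ω * φ) j = trA x ω j * jmp x φ j + trA x φ j * jmp x ω j := by
  simp only [jmp, trA, trP, trM, Pi.mul_apply, eval_mul]
  ring

theorem Lc_add_Lc_swap (ω φ : Fin N → ℝ[X]) : Lc x ω φ + Lc x φ ω = 0 := by
  calc Lc x ω φ + Lc x φ ω
      = -∑ j, (ipj x ω j (derivative (φ j)) + ipj x φ j (derivative (ω j)))
          + ∑ j, bdj x (trA x ω) j (φ j) + ∑ j, bdj x (trA x φ) j (ω j) := by
        simp only [Lc, Finset.sum_add_distrib, Finset.sum_neg_distrib]
        ring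
    _ = ∑ j, jmp x (ω * φ) j
          - ∑ j, trA x ω j * jmp x φ j - ∑ j, trA x φ j * jmp x ω j := by
        simp only [ipj_derivative_add_ipj_derivative, sum_bdj, ← Pi.mul_apply ω φ,
          sum_eval_succ_sub_eval_castSucc]
        ring
    _ = 0 := by
        simp only [jmp_mul, Finset.sum_add_distrib]
        ring

theorem sum_ipj_eq_Lc {w ω ψ : Fin N → ℝ[X]}
    (h : ∀ j, ipj x w j (ψ j) = bdj x (trA x ω) j (ψ j) - ipj x ω j (derivative (ψ j))) :
    ∑ j, ipj x w j (ψ j) = Lc x ω ψ :=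
  Finset.sum_congr rfl fun j _ => by rw [h]; ring

end FW

theorem stmt13_general {N : ℕ} [NeZero N]
    (x : Fin (N + 1) → ℝ)
    (k : ℕ) (u v q : Fin N → Polynomial ℝ)
    (hu : FW.memV k u) (hv : FW.memV k v) (hq : FW.memV k q)
    (heq2 : ∀ (j : Fin N), ∀ φ : Polynomial ℝ, φ.degree ≤ (k : WithBot ℕ) →
      FW.ipj x v j φ - FW.bdj x (FW.trA x q) j φ + FW.ipj x q j (Polynomial.derivative φ)
        = FW.bdj x (FW.trA x u) j φ - FW.ipj x u j (Polynomial.derivative φ))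
    (heq3 : ∀ (j : Fin N), ∀ φ : Polynomial ℝ, φ.degree ≤ (k : WithBot ℕ) →
      FW.ipj x q j φ = FW.bdj x (FW.trA x v) j φ - FW.ipj x v j (Polynomial.derivative φ)) :
    (∑ j : Fin N, FW.ipj x v j (v j)) + (∑ j : Fin N, FW.ipj x q j (q j))
      + (∑ j : Fin N, FW.ipj x q j (u j)) = 0 := by
  have hvv : ∑ j, FW.ipj x v j (v j) = FW.Lc x q v + FW.Lc x u v := by
    simp only [FW.Lc, ← Finset.sum_add_distrib]
    exact Finset.sum_congr rfl fun j _ => by linarith [heq2 j (v j) (hv j)]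
  rw [hvv, FW.sum_ipj_eq_Lc x fun j => heq3 j _ (hq j),
    FW.sum_ipj_eq_Lc x fun j => heq3 j _ (hu j)]
  linarith [FW.Lc_add_Lc_swap x q v, FW.Lc_add_Lc_swap x u v]

theorem stmt13 {N : ℕ} [NeZero N] (hN : 1 ≤ N) (a b : ℝ) (hab : a < b)
    (x : Fin (N + 1) → ℝ) (hx : StrictMono x) (hxa : x 0 = a) (hxb : x (Fin.last N) = b)
    (k : ℕ) (u v q : Fin N → Polynomial ℝ)
    (hu : FW.memV k u) (hv : FW.memV k v) (hq : FW.memV k q)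
    (heq2 : ∀ (j : Fin N), ∀ φ : Polynomial ℝ, φ.degree ≤ (k : WithBot ℕ) →
      FW.ipj x v j φ - FW.bdj x (FW.trA x q) j φ + FW.ipj x q j (Polynomial.derivative φ)
        = FW.bdj x (FW.trA x u) j φ - FW.ipj x u j (Polynomial.derivative φ))
    (heq3 : ∀ (j : Fin N), ∀ φ : Polynomial ℝ, φ.degree ≤ (k : WithBot ℕ) →
      FW.ipj x q j φ = FW.bdj x (FW.trA x v) j φ - FW.ipj x v j (Polynomial.derivative φ)) :
    (∑ j : Fin N, FW.ipj x v j (v j)) + (∑ j : Fin N, FW.ipj x q j (q j))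
      + (∑ j : Fin N, FW.ipj x q j (u j)) = 0 :=
  stmt13_general x k u v q hu hv hq heq2 heq3
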